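/- Let (A, V, γ, res, tr) be a Q-Mackey functor, let W = V / im(res) be the cokernel of res with projection π : V → W, and let Ṽ be the sign twist of V (same abelian group, involution −γ). Then: (a) π(v + γv) = 0 for all v ∈ V, so π((−γ)v) = π(v); (b) there is a unique additive map r : W → V satisfying r(π v) = v − γv for all v ∈ V (well-definedness follows since (1−γ)(im res) = 0); (c) γ(r w) = −r(w) for all w ∈ W. In particular, the data (W, Ṽ, γ̃ = −γ, restriction r, transfer π) satisfies all the Q-Mackey functor axioms: r(π v) = v + γ̃v, π(γ̃ v) = π(v), and γ̃(r w) = r(w). -/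

import Mathlib

/-!
The element `v + γ v = res (tr v)` dies in the cokernel `W = V ⧸ im res`, so `π (-γ v) = π v`.
Since `γ` fixes `im res`, the map `1 - γ` kills `im res` and descends to `r : W → V`; uniqueness
holds because `π` is surjective. Finally `γ (v - γ v) = γ v - v` as `γ` is an involution, so
`r` lands in the `(-1)`-eigenspace of `γ`, i.e. in the `γ`-fixed part of the sign twist.
-/

namespace QMackey

open QuotientAddGroup

variable {A V : Type*} [AddCommGroup A] [AddCommGroup V]

theorem mk'_add_apply_eq_zero (γ : V →+ V) (res : A →+ V) (tr : V →+ A)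
    (hrestr : ∀ v, res (tr v) = v + γ v) (v : V) : mk' res.range (v + γ v) = 0 :=
  (eq_zero_iff _).2 ⟨tr v, hrestr v⟩

theorem mk'_neg_apply (γ : V →+ V) (res : A →+ V) (tr : V →+ A)
    (hrestr : ∀ v, res (tr v) = v + γ v) (v : V) : mk' res.range (-(γ v)) = mk' res.range v := by
  have h := mk'_add_apply_eq_zero γ res tr hrestr v
  rw [map_add, add_eq_zero_iff_eq_neg'] at h
  rw [map_neg, h, neg_neg]

def cokernelLift (γ : V →+ V) (res : A →+ V) (hγres : ∀ a, γ (res a) = res a) :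
    V ⧸ res.range →+ V :=
  lift res.range (AddMonoidHom.id V - γ) <| by
    rintro _ ⟨a, rfl⟩
    simp [hγres a]

@[simp]
theorem cokernelLift_mk' (γ : V →+ V) (res : A →+ V) (hγres : ∀ a, γ (res a) = res a) (v : V) :
    cokernelLift γ res hγres (mk' res.range v) = v - γ v :=
  rfl

theorem existsUnique_cokernelLift (γ : V →+ V) (res : A →+ V) (hγres : ∀ a, γ (res a) = res a) :
    ∃! r : V ⧸ res.range →+ V, ∀ v, r (mk' res.range v) = v - γ v :=
  ⟨cokernelLift γ res hγres, cokernelLift_mk' γ res hγres, fun _ hr ↦ addMonoidHom_ext _ <|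
    AddMonoidHom.ext hr⟩

theorem apply_eq_neg_of_forall_mk' {H : AddSubgroup V} (γ : V →+ V) (hγγ : ∀ v, γ (γ v) = v)
    (r : V ⧸ H →+ V) (hr : ∀ v, r (mk' H v) = v - γ v) (w : V ⧸ H) : γ (r w) = -(r w) := by
  induction w using QuotientAddGroup.induction_on with
  | H v =>
    rw [← mk'_apply, hr v, map_sub, hγγ v, neg_sub]

end QMackey

open QMackey in
theorem stmt11_general {A V : Type*} [AddCommGroup A] [AddCommGroup V]
    (γ : V →+ V) (res : A →+ V) (tr : V →+ A)
    (hγγ : ∀ v, γ (γ v) = v)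
    (hrestr : ∀ v, res (tr v) = v + γ v)
    (hγres : ∀ a, γ (res a) = res a) :
    (∀ v, QuotientAddGroup.mk' res.range (v + γ v) = 0) ∧
    (∀ v, QuotientAddGroup.mk' res.range (-(γ v)) = QuotientAddGroup.mk' res.range v) ∧
    (∃! r : (V ⧸ res.range) →+ V,
      ∀ v, r (QuotientAddGroup.mk' res.range v) = v - γ v) ∧
    (∀ r : (V ⧸ res.range) →+ V,
      (∀ v, r (QuotientAddGroup.mk' res.range v) = v - γ v) →
      (∀ w, γ (r w) = -(r w)) ∧
      (∀ v, r (QuotientAddGroup.mk' res.range v) = v + (-(γ v))) ∧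
      (∀ v, QuotientAddGroup.mk' res.range (-(γ v)) = QuotientAddGroup.mk' res.range v) ∧
      (∀ w, -(γ (r w)) = r w)) := by
  have hneg := mk'_neg_apply γ res tr hrestr
  refine ⟨mk'_add_apply_eq_zero γ res tr hrestr, hneg, existsUnique_cokernelLift γ res hγres,
    fun r hr ↦ ?_⟩
  have hanti := apply_eq_neg_of_forall_mk' γ hγγ r hr
  exact ⟨hanti, fun v ↦ by rw [hr v, sub_eq_add_neg], hneg, fun w ↦ by rw [hanti w, neg_neg]⟩

/-- With `W = V / im res` the cokernel of `res` and `π` the projection, and with the sign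
twist of `V` carrying the involution `-γ`: (a) `π (v + γ v) = 0`, so `π (-(γ v)) = π v`;
(b) there is a unique additive map `r : W → V` with `r (π v) = v - γ v`;
(c) `γ (r w) = -(r w)`. In particular `(W, Ṽ, -γ, r, π)` satisfies all the `Q`-Mackey
functor axioms: `r (π v) = v + (-γ) v`, `π ((-γ) v) = π v` and `(-γ) (r w) = r w`. -/
theorem stmt11 {A V : Type*} [AddCommGroup A] [AddCommGroup V]
    (γ : V →+ V) (res : A →+ V) (tr : V →+ A)
    (hγγ : ∀ v, γ (γ v) = v)
    (hrestr : ∀ v, res (tr v) = v + γ v)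
    (htrγ : ∀ v, tr (γ v) = tr v)
    (hγres : ∀ a, γ (res a) = res a) :
    (∀ v, QuotientAddGroup.mk' res.range (v + γ v) = 0) ∧
    (∀ v, QuotientAddGroup.mk' res.range (-(γ v)) = QuotientAddGroup.mk' res.range v) ∧
    (∃! r : (V ⧸ res.range) →+ V,
      ∀ v, r (QuotientAddGroup.mk' res.range v) = v - γ v) ∧
    (∀ r : (V ⧸ res.range) →+ V,
      (∀ v, r (QuotientAddGroup.mk' res.range v) = v - γ v) →
      (∀ w, γ (r w) = -(r w)) ∧
      (∀ v, r (QuotientAddGroup.mk' res.range v) = v + (-(γ v))) ∧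
      (∀ v, QuotientAddGroup.mk' res.range (-(γ v)) = QuotientAddGroup.mk' res.range v) ∧
      (∀ w, -(γ (r w)) = r w)) :=
  stmt11_general γ res tr hγγ hrestr hγres
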